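/- For every real α < 1, every real γ, every natural number n, and every real number y: (yα − γ)_{n↑} = ∑_{k=0}^{n} S_{n,k}^{-1,-α,γ} · (yα)_{k↑α}, i.e. the non-central generalized Stirling numbers defined by the convolution formula are the connection coefficients between the shifted rising factorials (yα − γ)_{n↑} and the α-increment rising factorials (yα)_{k↑α}. -/

import Mathlib

/-- Generalized rising factorial `(x)_{n↑h} = ∏_{i=0}^{n-1} (x + i·h)`. -/
noncomputable def risefac (x h : ℝ) (n : ℕ) : ℝ := ∏ i ∈ Finset.range n, (x + i * h)

/-- Generalized Stirling number `S_{n,k}^{-1,-α} = (n!/k!) ∑ ∏_j (1-α)_{n_j-1↑}/n_j!`,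
the sum over positive tuples `(n_1,…,n_k)` with sum `n`. -/
noncomputable def genStirling (α : ℝ) (n k : ℕ) : ℝ :=
  ((n.factorial : ℝ) / k.factorial) *
    ∑ f ∈ (Finset.Nat.antidiagonalTuple k n).filter (fun f => ∀ i, 0 < f i),
      ∏ j, risefac (1 - α) 1 (f j - 1) / (f j).factorial

/-- Non-central generalized Stirling number
`S_{n,k}^{-1,-α,γ} = ∑_{s=k}^n binom(n,s) S_{s,k}^{-1,-α} (−γ)_{n-s↑}`. -/
noncomputable def genStirlingNC (α γ : ℝ) (n k : ℕ) : ℝ :=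
  ∑ s ∈ Finset.Icc k n, (n.choose s : ℝ) * genStirling α s k * risefac (-γ) 1 (n - s)

/-!
Put `F(t) = ∑_{m ≥ 1} (1-α)_{m-1↑} tᵐ / m!`, so that `S_{n,k}^{-1,-α} = (n!/k!) [tⁿ] Fᵏ`.
The recursion `f_1 = 1`, `(m + 1) f_{m+1} = (m - α) f_m` for the coefficients of `F` is the differential
equation `(1 - t) F' = 1 - α F`; applied to `Fᵏ⁺¹` it becomes the triangular recurrence
`S_{n+1,k+1} = S_{n,k} + (n - (k+1)α) S_{n,k+1}`. Since `x + n = (x + kα) + (n - kα)`, the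
coefficients expanding `(x)_{n↑}` in the basis `(x)_{k↑α}` obey the same recurrence, and the
non-central case follows by expanding `(x - γ)_{n↑}` with the Vandermonde convolution.
-/

open Finset PowerSeries

@[simp]
theorem risefac_zero (x h : ℝ) : risefac x h 0 = 1 := prod_range_zero _

theorem risefac_succ (x h : ℝ) (n : ℕ) : risefac x h (n + 1) = risefac x h n * (x + n * h) :=
  prod_range_succ _ _

theorem risefac_add (a b : ℝ) (n : ℕ) :
    risefac (a + b) 1 n =
      ∑ ij ∈ antidiagonal n, (n.choose ij.1 : ℝ) * (risefac a 1 ij.1 * risefac b 1 ij.2) := by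
  induction n with
  | zero => simp
  | succ n ih =>
    rw [risefac_succ, ih, sum_antidiagonal_choose_succ_mul
      (fun i j => risefac a 1 i * risefac b 1 j) n, sum_mul, ← sum_add_distrib]
    refine sum_congr rfl fun ij hij => ?_
    have hsum : ij.1 + ij.2 = n := mem_antidiagonal.mp hij
    have hsum' : (ij.1 : ℝ) + ij.2 = n := by exact_mod_cast hsum
    rw [risefac_succ, risefac_succ, ← Nat.choose_symm_of_eq_add hsum.symm, ← hsum']
    ring

theorem coeff_pow_eq_sum_antidiagonalTuple {R : Type*} [CommSemiring R] (φ : R⟦X⟧) (k n : ℕ) :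
    coeff n (φ ^ k) = ∑ f ∈ Nat.antidiagonalTuple k n, ∏ j, coeff (f j) φ := by
  rw [← Fin.prod_const, coeff_prod]
  refine sum_nbij' (⇑) Finsupp.equivFunOnFinite.symm ?_ ?_ ?_ ?_ ?_ <;>
    simp [Nat.mem_antidiagonalTuple]

theorem coeff_one_sub_X_mul_derivative {R : Type*} [CommRing R] (g : R⟦X⟧) (n : ℕ) :
    coeff n ((1 - X) * d⁄dX R g) = (n + 1) * coeff (n + 1) g - n * coeff n g := by
  rw [sub_mul, one_mul, map_sub, coeff_derivative]
  cases n with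
  | zero => simp
  | succ n => rw [coeff_succ_X_mul, coeff_derivative]; push_cast; ring

noncomputable def stirlingSeries (α : ℝ) : ℝ⟦X⟧ :=
  mk fun m => if m = 0 then 0 else risefac (1 - α) 1 (m - 1) / m.factorial

namespace stirlingSeries

variable (α : ℝ)

@[simp]
theorem constantCoeff_eq_zero : constantCoeff (stirlingSeries α) = 0 := by simp [stirlingSeries]

theorem coeff_succ (m : ℕ) :
    coeff (m + 1) (stirlingSeries α) = risefac (1 - α) 1 m / (m + 1).factorial := by
  simp [stirlingSeries]

theorem one_sub_X_mul_derivative :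
    (1 - X) * d⁄dX ℝ (stirlingSeries α) = 1 - C α * stirlingSeries α := by
  ext n
  rw [coeff_one_sub_X_mul_derivative, map_sub, coeff_C_mul]
  cases n with
  | zero => simp [coeff_succ]
  | succ m =>
    rw [coeff_succ, coeff_succ, risefac_succ, Nat.factorial_succ (m + 1), coeff_one,
      if_neg m.succ_ne_zero]
    have : ((m + 1).factorial : ℝ) ≠ 0 := by positivity
    field_simp
    push_cast
    ring

theorem one_sub_X_mul_derivative_pow (k : ℕ) :
    (1 - X) * d⁄dX ℝ (stirlingSeries α ^ (k + 1)) =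
      C ((k : ℝ) + 1) * stirlingSeries α ^ k -
        C (((k : ℝ) + 1) * α) * stirlingSeries α ^ (k + 1) := by
  rw [Derivation.leibniz_pow, Nat.add_sub_cancel, smul_eq_mul, nsmul_eq_mul,
    mul_left_comm, mul_left_comm (1 - X), one_sub_X_mul_derivative]
  simp only [map_mul, map_add, map_one, map_natCast, pow_succ, Nat.cast_add, Nat.cast_one]
  ring

theorem coeff_pow_succ_succ (n k : ℕ) :
    ((n : ℝ) + 1) * coeff (n + 1) (stirlingSeries α ^ (k + 1)) =
      ((k : ℝ) + 1) * coeff n (stirlingSeries α ^ k) +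
        ((n : ℝ) - ((k : ℝ) + 1) * α) * coeff n (stirlingSeries α ^ (k + 1)) := by
  have h := congrArg (coeff n) (one_sub_X_mul_derivative_pow α k)
  rw [coeff_one_sub_X_mul_derivative, map_sub, coeff_C_mul, coeff_C_mul] at h
  linear_combination h

end stirlingSeries

namespace genStirling

variable (α : ℝ)

theorem eq_coeff_stirlingSeries_pow (n k : ℕ) :
    genStirling α n k = (n.factorial / k.factorial : ℝ) * coeff n (stirlingSeries α ^ k) := by
  rw [genStirling, coeff_pow_eq_sum_antidiagonalTuple]
  congr 1
  refine (sum_congr rfl fun f hf => prod_congr rfl fun j _ => ?_).trans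
    (sum_filter_of_ne fun f _ hf i => Nat.pos_of_ne_zero fun hi => hf ?_)
  · obtain ⟨m, hm⟩ := Nat.exists_eq_add_one_of_ne_zero ((mem_filter.mp hf).2 j).ne'
    rw [hm, stirlingSeries.coeff_succ, Nat.add_sub_cancel]
  · exact prod_eq_zero (mem_univ i) (by simp [hi])

@[simp]
theorem zero_zero : genStirling α 0 0 = 1 := by simp [eq_coeff_stirlingSeries_pow]

@[simp]
theorem succ_zero (n : ℕ) : genStirling α (n + 1) 0 = 0 := by
  simp [eq_coeff_stirlingSeries_pow, coeff_one]

theorem eq_zero_of_lt {n k : ℕ} (h : n < k) : genStirling α n k = 0 := by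
  have hX : X ∣ stirlingSeries α := X_dvd_iff.mpr (stirlingSeries.constantCoeff_eq_zero α)
  rw [eq_coeff_stirlingSeries_pow, X_pow_dvd_iff.mp (pow_dvd_pow_of_dvd hX k) n h, mul_zero]

theorem succ_succ (n k : ℕ) :
    genStirling α (n + 1) (k + 1) =
      genStirling α n k + ((n : ℝ) - ((k : ℝ) + 1) * α) * genStirling α n (k + 1) := by
  simp only [eq_coeff_stirlingSeries_pow, Nat.factorial_succ, Nat.cast_mul, Nat.cast_succ]
  have : (k.factorial : ℝ) ≠ 0 := by positivity
  field_simp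
  exact stirlingSeries.coeff_pow_succ_succ α n k

end genStirling

theorem risefac_one_eq_sum_genStirling (α x : ℝ) (n : ℕ) :
    risefac x 1 n = ∑ k ∈ range (n + 1), genStirling α n k * risefac x α k := by
  induction n with
  | zero => simp
  | succ n ih =>
    set g : ℕ → ℝ := fun k => ((n : ℝ) - k * α) * (genStirling α n k * risefac x α k)
    have hg₀ : g 0 = 0 := by cases n <;> simp [g]
    have hg_top : g (n + 1) = 0 := by simp [g, genStirling.eq_zero_of_lt α n.lt_succ_self]
    have hshift : ∑ k ∈ range (n + 1), g (k + 1) = ∑ k ∈ range (n + 1), g k := by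
      have := sum_range_succ' g (n + 1)
      rw [sum_range_succ, hg₀, hg_top] at this
      linarith
    calc risefac x 1 (n + 1)
        = ∑ k ∈ range (n + 1), (genStirling α n k * risefac x α (k + 1) + g k) := by
          rw [risefac_succ, ih, sum_mul]
          refine sum_congr rfl fun k _ => ?_
          rw [risefac_succ]
          ring
      _ = ∑ k ∈ range (n + 1), (genStirling α n k * risefac x α (k + 1) + g (k + 1)) := by
          rw [sum_add_distrib, sum_add_distrib, hshift]
      _ = ∑ k ∈ range (n + 1 + 1), genStirling α (n + 1) k * risefac x α k := by
          rw [sum_range_succ' _ (n + 1), genStirling.succ_zero, zero_mul, add_zero]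
          refine sum_congr rfl fun k _ => ?_
          simp only [g, genStirling.succ_succ]
          push_cast
          ring

theorem risefac_sub_eq_sum_genStirlingNC (α γ x : ℝ) (n : ℕ) :
    risefac (x - γ) 1 n = ∑ k ∈ range (n + 1), genStirlingNC α γ n k * risefac x α k := by
  rw [sub_eq_add_neg, risefac_add, Nat.sum_antidiagonal_eq_sum_range_succ_mk]
  simp only [risefac_one_eq_sum_genStirling α x, sum_mul, mul_sum]
  rw [sum_comm' (t' := range (n + 1)) (s' := fun k => Icc k n) fun s k => by
    simp only [mem_range, mem_Icc]; omega]
  refine sum_congr rfl fun k _ => ?_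
  rw [genStirlingNC, sum_mul]
  exact sum_congr rfl fun s _ => by ring

theorem risefac_eq_sum_genStirlingNC_general (α : ℝ) (γ : ℝ) (n : ℕ) (y : ℝ) :
    risefac (y * α - γ) 1 n =
      ∑ k ∈ Finset.range (n + 1), genStirlingNC α γ n k * risefac (y * α) α k :=
  risefac_sub_eq_sum_genStirlingNC α γ (y * α) n

/-- `(yα − γ)_{n↑} = ∑_{k=0}^n S_{n,k}^{-1,-α,γ} (yα)_{k↑α}`: the non-central generalized
Stirling numbers are the connection coefficients between the shifted rising factorials
and the α-increment rising factorials. -/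
theorem risefac_eq_sum_genStirlingNC (α : ℝ) (hα : α < 1) (γ : ℝ) (n : ℕ) (y : ℝ) :
    risefac (y * α - γ) 1 n =
      ∑ k ∈ Finset.range (n + 1), genStirlingNC α γ n k * risefac (y * α) α k :=
  risefac_eq_sum_genStirlingNC_general α γ n y
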